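/- arXiv:1107.0233 — 2 statements merged into one kernel-verified Lean document; each statement's English description precedes it below -/
import Mathlib

section
/- Suppose q > μ. Then the function h(s) := Z(s) − q·W(s) is strictly decreasing on (0,∞), satisfies h(0) = 1 > 0, and lim_{s→∞} h(s) = −∞. (Brownian-motion instance of Proposition 2.1 of the paper.) -/
open Real Filter Set MeasureTheory

noncomputable def dlt (σ μ q : ℝ) : ℝ := Real.sqrt ((μ / σ ^ 2 - 1 / 2) ^ 2 + 2 * q / σ ^ 2)

noncomputable def gma (σ μ : ℝ) : ℝ := 1 / 2 - μ / σ ^ 2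

noncomputable def gma1 (σ μ q : ℝ) : ℝ := gma σ μ - dlt σ μ q

noncomputable def gma2 (σ μ q : ℝ) : ℝ := gma σ μ + dlt σ μ q

/-- The scale function `W^{(q)}` of `X_t = (μ - σ²/2) t + σ B_t`. -/
noncomputable def W (σ μ q : ℝ) (x : ℝ) : ℝ :=
  if 0 ≤ x then 2 / (σ ^ 2 * dlt σ μ q) * Real.exp (gma σ μ * x) * Real.sinh (dlt σ μ q * x)
  else 0

/-- The scale function `Z^{(q)}` of `X_t = (μ - σ²/2) t + σ B_t`. -/
noncomputable def Z (σ μ q : ℝ) (x : ℝ) : ℝ :=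
  if 0 ≤ x then
    Real.exp (gma σ μ * x) * Real.cosh (dlt σ μ q * x)
      - gma σ μ / dlt σ μ q * Real.exp (gma σ μ * x) * Real.sinh (dlt σ μ q * x)
  else 1

/-- `k* = (γ₂ - γ₁)⁻¹ log((1 - 1/γ₁)/(1 - 1/γ₂))`. -/
noncomputable def kstar (σ μ q : ℝ) : ℝ :=
  (gma2 σ μ q - gma1 σ μ q)⁻¹ *
    Real.log ((1 - 1 / gma1 σ μ q) / (1 - 1 / gma2 σ μ q))

lemma dlt_sq (σ μ q : ℝ) (hσ : 0 < σ) (hq : 0 < q) :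
    dlt σ μ q ^ 2 = gma σ μ ^ 2 + 2 * q / σ ^ 2 := by
  have h0 : (0:ℝ) ≤ (μ / σ ^ 2 - 1 / 2) ^ 2 + 2 * q / σ ^ 2 := by
    have : 0 < 2 * q / σ ^ 2 := by positivity
    nlinarith [sq_nonneg (μ / σ ^ 2 - 1 / 2)]
  have := Real.sq_sqrt h0
  unfold dlt gma
  rw [this]; ring

lemma dlt_pos (σ μ q : ℝ) (hσ : 0 < σ) (hq : 0 < q) : 0 < dlt σ μ q := by
  apply Real.sqrt_pos.2
  have : 0 < 2 * q / σ ^ 2 := by positivity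
  nlinarith [sq_nonneg (μ / σ ^ 2 - 1 / 2)]

/-- Key algebraic identity: for `s ≥ 0`,
`Z - q W = A e^{(g+d)s} + B e^{(g-d)s}` with factored coefficients. -/
lemma alg_id (d g q σ E F : ℝ) (hd : d ≠ 0) (hσ : σ ≠ 0) (hF : F ≠ 0)
    (hq : q = σ ^ 2 * (d ^ 2 - g ^ 2) / 2) :
    E * ((F + F⁻¹) / 2) - g / d * E * ((F - F⁻¹) / 2)
      - q * (2 / (σ ^ 2 * d) * E * ((F - F⁻¹) / 2)) =
    (d - g) * (1 - g - d) / (2 * d) * (E * F)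
      + (d + g) * (1 + d - g) / (2 * d) * (E * F⁻¹) := by
  subst hq
  field_simp
  ring

lemma key_eq (σ μ q : ℝ) (hσ : 0 < σ) (hq : 0 < q) (s : ℝ) (hs : 0 ≤ s) :
    Z σ μ q s - q * W σ μ q s =
      (dlt σ μ q - gma σ μ) * (1 - gma σ μ - dlt σ μ q) / (2 * dlt σ μ q) *
          Real.exp ((gma σ μ + dlt σ μ q) * s)
        + (dlt σ μ q + gma σ μ) * (1 + dlt σ μ q - gma σ μ) / (2 * dlt σ μ q) *
          Real.exp ((gma σ μ - dlt σ μ q) * s) := by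
  set d := dlt σ μ q with hd
  set g := gma σ μ with hg
  have hdpos : 0 < d := dlt_pos σ μ q hσ hq
  have hσ2 : (σ:ℝ) ^ 2 ≠ 0 := by positivity
  have hqe : q = σ ^ 2 * (d ^ 2 - g ^ 2) / 2 := by
    have h2 := dlt_sq σ μ q hσ hq
    rw [← hd, ← hg] at h2
    field_simp at h2 ⊢
    linarith
  rw [Z, W, if_pos hs, if_pos hs, Real.cosh_eq, Real.sinh_eq]
  rw [show (g + d) * s = g * s + d * s by ring, show (g - d) * s = g * s + -(d * s) by ring,
    Real.exp_add, Real.exp_add, Real.exp_neg]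
  rw [← hd, ← hg]
  exact alg_id d g q σ (Real.exp (g * s)) (Real.exp (d * s)) hdpos.ne' (by positivity)
    (Real.exp_ne_zero _) hqe

theorem stmt_7 (σ μ q : ℝ) (hσ : 0 < σ) (hq : 0 < q) (hqμ : μ < q) :
    StrictAntiOn (fun s => Z σ μ q s - q * W σ μ q s) (Set.Ioi (0 : ℝ)) ∧
    Z σ μ q 0 - q * W σ μ q 0 = 1 ∧
    Filter.Tendsto (fun s => Z σ μ q s - q * W σ μ q s) Filter.atTop Filter.atBot := by
  set d := dlt σ μ q with hd
  set g := gma σ μ with hg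
  have hdpos : 0 < d := dlt_pos σ μ q hσ hq
  have hd2 : d ^ 2 = g ^ 2 + 2 * q / σ ^ 2 := dlt_sq σ μ q hσ hq
  have hσ2 : (0:ℝ) < σ ^ 2 := by positivity
  have h2q : 0 < 2 * q / σ ^ 2 := by positivity
  -- |g| < d
  have hgd : g < d := by nlinarith
  have hgd' : -d < g := by nlinarith
  -- γ₂ = g + d > 1
  have hγ2 : 1 < g + d := by
    have hqm : 0 < 2 * (q - μ) / σ ^ 2 := div_pos (by linarith) hσ2
    have : d ^ 2 - (1 - g) ^ 2 = 2 * (q - μ) / σ ^ 2 := by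
      rw [hd2, hg]; unfold gma; field_simp; ring
    nlinarith
  set A := (d - g) * (1 - g - d) / (2 * d) with hA
  set B := (d + g) * (1 + d - g) / (2 * d) with hB
  have hAneg : A < 0 := by
    apply div_neg_of_neg_of_pos _ (by linarith)
    apply mul_neg_of_pos_of_neg <;> linarith
  have hBpos : 0 < B := by
    apply div_pos _ (by linarith)
    apply mul_pos <;> linarith
  have hkey : ∀ s : ℝ, 0 ≤ s → Z σ μ q s - q * W σ μ q s =
      A * Real.exp ((g + d) * s) + B * Real.exp ((g - d) * s) := fun s hs =>
    key_eq σ μ q hσ hq s hs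
  refine ⟨?_, ?_, ?_⟩
  · intro a ha b hb hab
    simp only [Set.mem_Ioi] at ha hb
    simp only
    rw [hkey a ha.le, hkey b hb.le]
    have h1 : A * Real.exp ((g + d) * b) < A * Real.exp ((g + d) * a) := by
      apply mul_lt_mul_of_neg_left _ hAneg
      exact Real.exp_lt_exp.2 (by nlinarith)
    have h2 : B * Real.exp ((g - d) * b) < B * Real.exp ((g - d) * a) := by
      apply mul_lt_mul_of_pos_left _ hBpos
      exact Real.exp_lt_exp.2 (by nlinarith)
    linarith
  · simp [Z, W]
  · have h1 : Filter.Tendsto (fun s : ℝ => A * Real.exp ((g + d) * s)) Filter.atTop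
        Filter.atBot := by
      apply (Filter.tendsto_const_mul_atBot_of_neg hAneg).2
      exact Real.tendsto_exp_atTop.comp (Filter.tendsto_id.const_mul_atTop (by linarith))
    have hEv : ∀ᶠ s : ℝ in Filter.atTop, B * Real.exp ((g - d) * s) ≤ B := by
      filter_upwards [Filter.eventually_ge_atTop (0:ℝ)] with s hs
      have : Real.exp ((g - d) * s) ≤ 1 := by
        rw [← Real.exp_zero]
        exact Real.exp_le_exp.2 (by nlinarith)
      nlinarith
    have := tendsto_atBot_add_right_of_ge' Filter.atTop B h1 hEv
    apply this.congr'
    filter_upwards [Filter.eventually_ge_atTop (0:ℝ)] with s hs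
    rw [hkey s hs]
end

section
/- Suppose q ≤ μ. Then Z(x) − q·W(x) ≥ e^{γ₁x} > 0 for every x ≥ 0; in particular the equation Z(z) = q·W(z) has no solution z ∈ (0,∞), i.e. k* := inf{z ∈ ℝ : Z(z) ≤ q W(z)} = +∞. -/
open Real Filter Set MeasureTheory

/-!
For `x ≥ 0` one has `e^{γx}(cosh δx - sinh δx) = e^{γ₁x}`, so
`Z(x) - qW(x) = e^{γ₁x} + e^{γx} sinh(δx) (1 - (γ + 2q/σ²)/δ)`.
The second term is nonnegative because `γ + 2q/σ² ≤ δ`: with `a = q/σ²`, `b = μ/σ²`,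
`δ² - (γ + 2a)² = 4a(b - a) ≥ 0`, which is exactly where `q ≤ μ` enters.
-/

section ScaleFunctions

variable {σ μ q : ℝ}

theorem gma_add_le_dlt (hq : 0 ≤ q) (hqμ : q ≤ μ) :
    gma σ μ + 2 * q / σ ^ 2 ≤ dlt σ μ q := by
  have ha : 0 ≤ q / σ ^ 2 := by positivity
  have hba : 0 ≤ μ / σ ^ 2 - q / σ ^ 2 := by
    rw [← sub_div]
    exact div_nonneg (sub_nonneg.mpr hqμ) (sq_nonneg σ)
  refine (le_abs_self _).trans (Real.abs_le_sqrt ?_)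
  rw [gma, mul_div_assoc]
  nlinarith [mul_nonneg ha hba]

theorem Z_sub_mul_W {x : ℝ} (hx : 0 ≤ x) :
    Z σ μ q x - q * W σ μ q x = exp (gma1 σ μ q * x)
      + exp (gma σ μ * x) * sinh (dlt σ μ q * x)
        * (1 - (gma σ μ + 2 * q / σ ^ 2) / dlt σ μ q) := by
  have hγ₁ : exp (gma1 σ μ q * x)
      = exp (gma σ μ * x) * (cosh (dlt σ μ q * x) - sinh (dlt σ μ q * x)) := by
    rw [cosh_sub_sinh, ← exp_add, gma1, sub_mul, sub_eq_add_neg]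
  rw [Z, W, if_pos hx, if_pos hx, hγ₁]
  ring

theorem exp_gma1_mul_le_Z_sub_mul_W (hq : 0 ≤ q) (hqμ : q ≤ μ) {x : ℝ} (hx : 0 ≤ x) :
    exp (gma1 σ μ q * x) ≤ Z σ μ q x - q * W σ μ q x := by
  have hδ : 0 ≤ dlt σ μ q := Real.sqrt_nonneg _
  rw [Z_sub_mul_W hx, le_add_iff_nonneg_right]
  have hsinh : 0 ≤ sinh (dlt σ μ q * x) := sinh_nonneg_iff.mpr (mul_nonneg hδ hx)
  have hfactor : 0 ≤ 1 - (gma σ μ + 2 * q / σ ^ 2) / dlt σ μ q :=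
    sub_nonneg.mpr (div_le_one_of_le₀ (gma_add_le_dlt hq hqμ) hδ)
  exact mul_nonneg (mul_nonneg (exp_pos _).le hsinh) hfactor

theorem mul_W_lt_Z (hq : 0 ≤ q) (hqμ : q ≤ μ) (x : ℝ) : q * W σ μ q x < Z σ μ q x := by
  rcases le_or_gt 0 x with hx | hx
  · linarith [exp_gma1_mul_le_Z_sub_mul_W (σ := σ) hq hqμ hx, exp_pos (gma1 σ μ q * x)]
  · simp [Z, W, hx.not_ge]

end ScaleFunctions

theorem stmt_9_general (σ μ q : ℝ) (hq : 0 < q) (hqμ : q ≤ μ) :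
    (∀ x : ℝ, 0 ≤ x →
      Real.exp (gma1 σ μ q * x) ≤ Z σ μ q x - q * W σ μ q x ∧
      0 < Real.exp (gma1 σ μ q * x)) ∧
    (¬ ∃ z : ℝ, 0 < z ∧ Z σ μ q z = q * W σ μ q z) ∧
    {z : ℝ | Z σ μ q z ≤ q * W σ μ q z} = ∅ := by
  refine ⟨fun x hx => ⟨exp_gma1_mul_le_Z_sub_mul_W hq.le hqμ hx, exp_pos _⟩, ?_, ?_⟩
  · rintro ⟨z, -, hz⟩
    exact (mul_W_lt_Z hq.le hqμ z).ne' hz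
  · exact eq_empty_of_forall_notMem fun z hz => (mul_W_lt_Z hq.le hqμ z).not_ge hz

theorem stmt_9 (σ μ q : ℝ) (hσ : 0 < σ) (hq : 0 < q) (hqμ : q ≤ μ) :
    (∀ x : ℝ, 0 ≤ x →
      Real.exp (gma1 σ μ q * x) ≤ Z σ μ q x - q * W σ μ q x ∧
      0 < Real.exp (gma1 σ μ q * x)) ∧
    (¬ ∃ z : ℝ, 0 < z ∧ Z σ μ q z = q * W σ μ q z) ∧
    {z : ℝ | Z σ μ q z ≤ q * W σ μ q z} = ∅ :=
  stmt_9_general σ μ q hq hqμ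
end
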